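/- Let T be an operator of weak type (1,1), i.e. there is C > 0 with |{x : |Tg(x)| > λ}| ≤ C‖g‖_{L¹}/λ for all integrable g and all λ > 0. Let 0 < s ≤ 1/2 and 1/2 ≤ t ≤ 1−s. Then there is a constant c₁ (depending on n, s and C) such that for every cube Q ⊂ ℝⁿ, every locally integrable f, and every λ > 0, setting f₁ = (f − m_f(t,Q))·χ_{2Q}, one has |{z ∈ Q : |Tf₁(z)| > λ}| ≤ c₁ · (|Q|/λ) · inf_{y ∈ Q} M♯f(y). -/

import Mathlib

open MeasureTheory ENNReal

namespace LocalMedian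

/-- Euclidean space `ℝⁿ`. -/
abbrev Sp (n : ℕ) := EuclideanSpace ℝ (Fin n)

/-- An axis-parallel cube in `ℝⁿ`, given by its lower corner and (positive) sidelength. -/
structure Cube (n : ℕ) where
  corner : Sp n
  side : ℝ
  side_pos : 0 < side

namespace Cube

variable {n : ℕ}

/-- The set of points of the cube. -/
def set (Q : Cube n) : Set (Sp n) :=
  {x | ∀ i, Q.corner i ≤ x i ∧ x i ≤ Q.corner i + Q.side}

/-- The center of the cube. -/
noncomputable def center (Q : Cube n) : Sp n := WithLp.toLp 2 (fun i => Q.corner i + Q.side / 2)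

/-- The cube concentric with `Q` whose sidelength is `r` times that of `Q`. -/
noncomputable def dilate (Q : Cube n) (r : ℝ) (hr : 0 < r) : Cube n where
  corner := WithLp.toLp 2 (fun i => Q.center i - r * Q.side / 2)
  side := r * Q.side
  side_pos := mul_pos hr Q.side_pos

/-- `Q` is a dyadic subcube of `Q₀`, i.e. obtained from `Q₀` by repeated dyadic
subdivision into `2ⁿ` congruent subcubes. -/
def dyadicSub (Q₀ Q : Cube n) : Prop :=
  ∃ (k : ℕ) (m : Fin n → ℕ), (∀ i, m i < 2 ^ k) ∧
    Q.side = Q₀.side / 2 ^ k ∧ ∀ i, Q.corner i = Q₀.corner i + Q.side * m i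

/-- `Q` is one of the `2ⁿ` dyadic children of `P` (so `P` is the dyadic parent of `Q`). -/
def isDyadicChild (Q P : Cube n) : Prop :=
  Q.side = P.side / 2 ∧ ∃ m : Fin n → ℕ, (∀ i, m i < 2) ∧
    ∀ i, Q.corner i = P.corner i + Q.side * m i

end Cube

variable {n : ℕ}

/-- The (maximal) median of `f` over the cube `Q` with parameter `t`:
`m_f(t,Q) = sup { M : |{y ∈ Q : f y < M}| ≤ t|Q| }`. -/
noncomputable def median (f : Sp n → ℝ) (t : ℝ) (Q : Cube n) : ℝ :=
  sSup {M : ℝ | volume {y ∈ Q.set | f y < M} ≤ ENNReal.ofReal t * volume Q.set}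

/-- The local oscillation `inf_c inf {α ≥ 0 : |{y ∈ Q : |f y - c| > α}| < s|Q|}`. -/
noncomputable def osc (f : Sp n → ℝ) (s : ℝ) (Q : Cube n) : ℝ :=
  ⨅ c : ℝ, sInf {α : ℝ | 0 ≤ α ∧
    volume {y ∈ Q.set | α < |f y - c|} < ENNReal.ofReal s * volume Q.set}

/-- The local sharp maximal function `M♯_{0,s,Q₀} f`, restricted to the cube `Q₀`. -/
noncomputable def sharpLoc (f : Sp n → ℝ) (s : ℝ) (Q₀ : Cube n) (x : Sp n) : ℝ≥0∞ :=
  ⨆ Q : {Q : Cube n // x ∈ Q.set ∧ Q.set ⊆ Q₀.set}, ENNReal.ofReal (osc f s Q.1)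

/-- The local sharp maximal function `M♯_{0,s} f` (over all cubes containing `x`). -/
noncomputable def sharp (f : Sp n → ℝ) (s : ℝ) (x : Sp n) : ℝ≥0∞ :=
  ⨆ Q : {Q : Cube n // x ∈ Q.set}, ENNReal.ofReal (osc f s Q.1)

/-- The Hardy–Littlewood maximal function (over cubes containing `x`). -/
noncomputable def maximal (f : Sp n → ℝ) (x : Sp n) : ℝ≥0∞ :=
  ⨆ Q : {Q : Cube n // x ∈ Q.set},
    (∫⁻ y in Q.1.set, ENNReal.ofReal |f y|) / volume Q.1.set

/-- The Hardy–Littlewood maximal function of an `ℝ≥0∞`-valued function. -/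
noncomputable def maximalE (g : Sp n → ℝ≥0∞) (x : Sp n) : ℝ≥0∞ :=
  ⨆ Q : {Q : Cube n // x ∈ Q.set}, (∫⁻ y in Q.1.set, g y) / volume Q.1.set

/-- The average `(1/|Q|) ∫_Q g`. -/
noncomputable def cubeAvg (g : Sp n → ℝ) (Q : Cube n) : ℝ :=
  (volume Q.set).toReal⁻¹ * ∫ y in Q.set, g y

/-- The Fefferman–Stein sharp maximal function
`M♯ g(x) = sup_{Q ∋ x} (1/|Q|) ∫_Q |g - g_Q|`. -/
noncomputable def fsSharp (g : Sp n → ℝ) (x : Sp n) : ℝ≥0∞ :=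
  ⨆ Q : {Q : Cube n // x ∈ Q.set},
    ENNReal.ofReal (cubeAvg (fun y => |g y - cubeAvg g Q.1|) Q.1)


/-!
By the weak type (1,1) bound it suffices to show `∫_{2Q} |f - m_f(t,Q)| ≲ |Q| M♯f(y)` for
every `y ∈ Q`. Split `f - m = (f - f_{2Q}) + (f_{2Q} - f_Q) + (f_Q - m)`: the first term
integrates to `|2Q|` times the mean oscillation of `f` on `2Q`, the second is at most `2ⁿ` times
that oscillation, and Chebyshev's inequality puts the median within `(1/t + 1/(1-t))` times the
mean oscillation on `Q` of the average `f_Q`. Both oscillations are bounded by `M♯f(y)`.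
-/

namespace Cube

variable {n : ℕ} (Q : Cube n)

lemma set_eq_preimage_pi :
    Q.set = EuclideanSpace.equiv (Fin n) ℝ ⁻¹'
      Set.univ.pi fun i => Set.Icc (Q.corner i) (Q.corner i + Q.side) := by
  ext x
  simp only [Set.mem_preimage, Set.mem_pi, Set.mem_univ, true_implies, Set.mem_Icc]
  rfl

lemma isCompact_set : IsCompact Q.set := by
  rw [set_eq_preimage_pi]
  exact (EuclideanSpace.equiv (Fin n) ℝ).toHomeomorph.isCompact_preimage.2
    (isCompact_univ_pi fun i => isCompact_Icc)

lemma measurableSet_set : MeasurableSet Q.set :=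
  Q.isCompact_set.isClosed.measurableSet

lemma volume_set : volume Q.set = ENNReal.ofReal (Q.side ^ n) := by
  have h := (EuclideanSpace.volume_preserving_symm_measurableEquiv_toLp (Fin n)).measure_preimage
    (MeasurableSet.univ_pi fun i => measurableSet_Icc
      (a := Q.corner i) (b := Q.corner i + Q.side)).nullMeasurableSet
  rw [set_eq_preimage_pi]
  refine h.trans ?_
  rw [volume_pi_pi]
  simp [Real.volume_Icc, ENNReal.ofReal_pow Q.side_pos.le]

lemma volume_set_ne_zero : volume Q.set ≠ 0 := by
  simp [volume_set, Q.side_pos]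

lemma volume_set_ne_top : volume Q.set ≠ ⊤ := by
  simp [volume_set]

lemma volume_dilate (r : ℝ) (hr : 0 < r) :
    volume (Q.dilate r hr).set = ENNReal.ofReal (r ^ n) * volume Q.set := by
  rw [volume_set, volume_set, dilate, mul_pow, ENNReal.ofReal_mul (by positivity)]

lemma set_subset_dilate {r : ℝ} (hr : 1 ≤ r) : Q.set ⊆ (Q.dilate r (by linarith)).set := by
  intro x hx i
  obtain ⟨hl, hu⟩ := hx i
  have := Q.side_pos
  simp only [dilate, center, WithLp.ofLp_toLp]
  constructor <;> nlinarith

lemma integrableOn_of_locallyIntegrable {f : Sp n → ℝ} (hf : LocallyIntegrable f volume) :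
    IntegrableOn f Q.set volume :=
  hf.integrableOn_isCompact Q.isCompact_set

end Cube

variable {n : ℕ}

noncomputable def meanOsc (f : Sp n → ℝ) (Q : Cube n) : ℝ :=
  cubeAvg (fun y => |f y - cubeAvg f Q|) Q

lemma meanOsc_nonneg (f : Sp n → ℝ) (Q : Cube n) : 0 ≤ meanOsc f Q :=
  mul_nonneg (inv_nonneg.2 ENNReal.toReal_nonneg) (integral_nonneg fun _ => abs_nonneg _)

lemma ofReal_meanOsc_le_fsSharp (f : Sp n → ℝ) {Q : Cube n} {y : Sp n} (hy : y ∈ Q.set) :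
    ENNReal.ofReal (meanOsc f Q) ≤ fsSharp f y :=
  le_iSup (fun Q' : {Q' : Cube n // y ∈ Q'.set} => ENNReal.ofReal (meanOsc f Q'.1)) ⟨Q, hy⟩

lemma setIntegral_eq_mul_cubeAvg (g : Sp n → ℝ) (Q : Cube n) :
    ∫ y in Q.set, g y = (volume Q.set).toReal * cubeAvg g Q := by
  have hQ : (volume Q.set).toReal ≠ 0 :=
    ENNReal.toReal_ne_zero.2 ⟨Q.volume_set_ne_zero, Q.volume_set_ne_top⟩
  rw [cubeAvg, mul_inv_cancel_left₀ hQ]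

lemma integrableOn_abs_sub_const {Q : Cube n} {f : Sp n → ℝ} (hf : IntegrableOn f Q.set volume)
    (c : ℝ) : IntegrableOn (fun y => |f y - c|) Q.set volume :=
  (hf.sub (integrableOn_const Q.volume_set_ne_top)).abs

lemma setIntegral_sub_const {Q : Cube n} {f : Sp n → ℝ} (hf : IntegrableOn f Q.set volume)
    (c : ℝ) :
    ∫ y in Q.set, (f y - c) = (volume Q.set).toReal * (cubeAvg f Q - c) := by
  rw [integral_sub hf (integrableOn_const Q.volume_set_ne_top), setIntegral_eq_mul_cubeAvg,
    setIntegral_const, smul_eq_mul, measureReal_def, mul_sub]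

lemma volume_le_abs_sub_cubeAvg_le {Q : Cube n} {f : Sp n → ℝ}
    (hf : IntegrableOn f Q.set volume) {ε : ℝ} (hε : 0 < ε) :
    volume {y ∈ Q.set | ε ≤ |f y - cubeAvg f Q|}
      ≤ ENNReal.ofReal (meanOsc f Q / ε) * volume Q.set := by
  have markov := mul_meas_ge_le_integral_of_nonneg (μ := volume.restrict Q.set)
    (Filter.Eventually.of_forall fun y => abs_nonneg (f y - cubeAvg f Q))
    (integrableOn_abs_sub_const hf _) ε
  have hset : volume.restrict Q.set {y | ε ≤ |f y - cubeAvg f Q|}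
      = volume {y ∈ Q.set | ε ≤ |f y - cubeAvg f Q|} := by
    rw [Measure.restrict_apply' Q.measurableSet_set, Set.inter_comm]
    rfl
  rw [measureReal_def, hset, setIntegral_eq_mul_cubeAvg] at markov
  have hfin : volume {y ∈ Q.set | ε ≤ |f y - cubeAvg f Q|} ≠ ⊤ :=
    measure_ne_top_of_subset (Set.sep_subset _ _) Q.volume_set_ne_top
  rw [← ENNReal.ofReal_toReal hfin, ← ENNReal.ofReal_toReal Q.volume_set_ne_top,
    ← ENNReal.ofReal_mul (div_nonneg (meanOsc_nonneg f Q) hε.le)]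
  refine ENNReal.ofReal_le_ofReal ?_
  rw [div_mul_eq_mul_div, le_div_iff₀ hε, meanOsc]
  linarith

section Median

variable {f : Sp n → ℝ} {t : ℝ} {Q : Cube n}

lemma le_cubeAvg_add_of_volume_lt_le (hf : IntegrableOn f Q.set volume) (ht0 : 0 ≤ t)
    (ht1 : t < 1) {M : ℝ}
    (hM : volume {y ∈ Q.set | f y < M} ≤ ENNReal.ofReal t * volume Q.set) :
    M ≤ cubeAvg f Q + meanOsc f Q / (1 - t) := by
  by_contra! hlt
  set ε := M - cubeAvg f Q
  have h1t : 0 < 1 - t := by linarith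
  have hoε : meanOsc f Q < (1 - t) * ε := by
    rw [← div_lt_iff₀' h1t]; linarith
  have hε : 0 < ε := lt_of_le_of_lt (div_nonneg (meanOsc_nonneg f Q) h1t.le) (by linarith)
  have hcover :
      Q.set ⊆ {y ∈ Q.set | f y < M} ∪ {y ∈ Q.set | ε ≤ |f y - cubeAvg f Q|} := by
    intro y hy
    by_cases hy' : f y < M
    · exact Or.inl ⟨hy, hy'⟩
    · exact Or.inr ⟨hy, by rw [abs_of_nonneg (by linarith)]; linarith⟩
  have hvol : 1 * volume Q.set ≤ ENNReal.ofReal (t + meanOsc f Q / ε) * volume Q.set := by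
    rw [one_mul, ENNReal.ofReal_add ht0 (div_nonneg (meanOsc_nonneg f Q) hε.le),
      add_mul]
    exact (measure_mono hcover).trans <| (measure_union_le _ _).trans <|
      add_le_add hM (volume_le_abs_sub_cubeAvg_le hf hε)
  have h1 := ENNReal.one_le_ofReal.1 <|
    (ENNReal.mul_le_mul_iff_left Q.volume_set_ne_zero Q.volume_set_ne_top).1 hvol
  rw [← sub_le_iff_le_add', le_div_iff₀ hε] at h1
  linarith

lemma volume_lt_cubeAvg_sub_le (hf : IntegrableOn f Q.set volume) {β : ℝ} (hβ : 0 < β)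
    (hoβ : meanOsc f Q ≤ t * β) :
    volume {y ∈ Q.set | f y < cubeAvg f Q - β} ≤ ENNReal.ofReal t * volume Q.set := by
  have hsub :
      {y ∈ Q.set | f y < cubeAvg f Q - β} ⊆ {y ∈ Q.set | β ≤ |f y - cubeAvg f Q|} :=
    fun y ⟨hy, hlt⟩ => ⟨hy, by rw [abs_sub_comm, abs_of_nonneg (by linarith)]; linarith⟩
  refine (measure_mono hsub).trans <| (volume_le_abs_sub_cubeAvg_le hf hβ).trans ?_
  gcongr
  rwa [div_le_iff₀ hβ]

lemma median_le_cubeAvg_add (hf : IntegrableOn f Q.set volume) (ht0 : 0 < t) (ht1 : t < 1) :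
    median f t Q ≤ cubeAvg f Q + meanOsc f Q / (1 - t) :=
  csSup_le ⟨cubeAvg f Q - (meanOsc f Q / t + 1), volume_lt_cubeAvg_sub_le hf (by
      have := meanOsc_nonneg f Q; positivity) (by
      rw [mul_add, mul_div_cancel₀ _ ht0.ne']; linarith)⟩
    fun _ hM => le_cubeAvg_add_of_volume_lt_le hf ht0.le ht1 hM

lemma cubeAvg_sub_le_median (hf : IntegrableOn f Q.set volume) (ht0 : 0 < t) (ht1 : t < 1) :
    cubeAvg f Q - meanOsc f Q / t ≤ median f t Q := by
  have hbdd :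
      BddAbove {M : ℝ | volume {y ∈ Q.set | f y < M} ≤ ENNReal.ofReal t * volume Q.set} :=
    ⟨_, fun _ hM => le_cubeAvg_add_of_volume_lt_le hf ht0.le ht1 hM⟩
  refine le_of_forall_pos_le_add fun δ hδ => ?_
  have hmem := volume_lt_cubeAvg_sub_le hf (β := meanOsc f Q / t + δ)
    (by have := meanOsc_nonneg f Q; positivity)
    (by rw [mul_add, mul_div_cancel₀ _ ht0.ne']; nlinarith)
  have := le_csSup hbdd hmem
  unfold median
  linarith

lemma abs_median_sub_cubeAvg_le (hf : IntegrableOn f Q.set volume) (ht0 : 0 < t) (ht1 : t < 1) :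
    |median f t Q - cubeAvg f Q| ≤ (1 / t + 1 / (1 - t)) * meanOsc f Q := by
  have hlo := cubeAvg_sub_le_median hf ht0 ht1
  have hhi := median_le_cubeAvg_add hf ht0 ht1
  have h0 := meanOsc_nonneg f Q
  have : 0 ≤ meanOsc f Q / t := by positivity
  have : 0 ≤ meanOsc f Q / (1 - t) := div_nonneg h0 (by linarith)
  rw [abs_le, add_mul, one_div_mul_eq_div, one_div_mul_eq_div]
  constructor <;> linarith

end Median

lemma toReal_volume_mul_abs_cubeAvg_sub_le {f : Sp n → ℝ} {Q R : Cube n} (hQR : Q.set ⊆ R.set)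
    (hf : IntegrableOn f R.set volume) :
    (volume Q.set).toReal * |cubeAvg f Q - cubeAvg f R|
      ≤ (volume R.set).toReal * meanOsc f R := by
  calc (volume Q.set).toReal * |cubeAvg f Q - cubeAvg f R|
      = |∫ y in Q.set, (f y - cubeAvg f R)| := by
        rw [setIntegral_sub_const (hf.mono_set hQR), abs_mul, abs_of_nonneg ENNReal.toReal_nonneg]
    _ ≤ ∫ y in Q.set, |f y - cubeAvg f R| := abs_integral_le_integral_abs
    _ ≤ ∫ y in R.set, |f y - cubeAvg f R| :=
        setIntegral_mono_set (integrableOn_abs_sub_const hf _)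
          (Filter.Eventually.of_forall fun _ => abs_nonneg _)
          hQR.eventuallyLE
    _ = (volume R.set).toReal * meanOsc f R := setIntegral_eq_mul_cubeAvg _ R

lemma setIntegral_abs_sub_le {f : Sp n → ℝ} {Q : Cube n} (hf : IntegrableOn f Q.set volume)
    (c : ℝ) :
    ∫ y in Q.set, |f y - c| ≤ (volume Q.set).toReal * (meanOsc f Q + |cubeAvg f Q - c|) := by
  have hint := integrableOn_abs_sub_const hf (cubeAvg f Q)
  calc ∫ y in Q.set, |f y - c|
      ≤ ∫ y in Q.set, (|f y - cubeAvg f Q| + |cubeAvg f Q - c|) :=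
        setIntegral_mono (integrableOn_abs_sub_const hf c)
          (hint.add (integrableOn_const Q.volume_set_ne_top)) fun y => abs_sub_le _ _ _
    _ = (volume Q.set).toReal * (meanOsc f Q + |cubeAvg f Q - c|) := by
        rw [integral_add hint (integrableOn_const Q.volume_set_ne_top), setIntegral_eq_mul_cubeAvg,
          setIntegral_const, smul_eq_mul, measureReal_def, mul_add]
        rfl

lemma setIntegral_abs_sub_median_dilate_le {f : Sp n → ℝ} (hf : LocallyIntegrable f volume)
    {t : ℝ} (ht0 : 0 < t) (ht1 : t < 1) (Q : Cube n) :
    ∫ y in (Q.dilate 2 two_pos).set, |f y - median f t Q|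
      ≤ 2 ^ n * (volume Q.set).toReal * ((1 + 2 ^ n) * meanOsc f (Q.dilate 2 two_pos)
        + (1 / t + 1 / (1 - t)) * meanOsc f Q) := by
  set R := Q.dilate 2 two_pos
  have hQR : Q.set ⊆ R.set := Q.set_subset_dilate one_le_two
  have hvR : (volume R.set).toReal = 2 ^ n * (volume Q.set).toReal := by
    rw [Q.volume_dilate, ENNReal.toReal_mul, ENNReal.toReal_ofReal (by positivity)]
  have hvQ : 0 < (volume Q.set).toReal :=
    ENNReal.toReal_pos Q.volume_set_ne_zero Q.volume_set_ne_top
  have hRQ : |cubeAvg f Q - cubeAvg f R| ≤ 2 ^ n * meanOsc f R := by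
    have := toReal_volume_mul_abs_cubeAvg_sub_le hQR (R.integrableOn_of_locallyIntegrable hf)
    rw [hvR, mul_assoc, mul_left_comm] at this
    exact le_of_mul_le_mul_left this hvQ
  have hmed := abs_median_sub_cubeAvg_le (Q.integrableOn_of_locallyIntegrable hf) ht0 ht1
  have hRm : |cubeAvg f R - median f t Q|
      ≤ 2 ^ n * meanOsc f R + (1 / t + 1 / (1 - t)) * meanOsc f Q := by
    rw [abs_sub_comm]
    linarith [abs_sub_le (median f t Q) (cubeAvg f Q) (cubeAvg f R)]
  calc ∫ y in R.set, |f y - median f t Q|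
      ≤ (volume R.set).toReal * (meanOsc f R + |cubeAvg f R - median f t Q|) :=
        setIntegral_abs_sub_le (R.integrableOn_of_locallyIntegrable hf) _
    _ ≤ (volume R.set).toReal * (meanOsc f R
          + (2 ^ n * meanOsc f R + (1 / t + 1 / (1 - t)) * meanOsc f Q)) := by gcongr
    _ = _ := by rw [hvR]; ring

lemma lintegral_abs_sub_median_dilate_le {f : Sp n → ℝ} (hf : LocallyIntegrable f volume)
    {t : ℝ} (ht0 : 0 < t) (ht1 : t < 1) {Q : Cube n} {y : Sp n} (hy : y ∈ Q.set) :
    ∫⁻ z in (Q.dilate 2 two_pos).set, ENNReal.ofReal |f z - median f t Q|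
      ≤ ENNReal.ofReal (2 ^ n * (1 + 2 ^ n + (1 / t + 1 / (1 - t)))) * volume Q.set
        * fsSharp f y := by
  set R := Q.dilate 2 two_pos
  have hK : 0 < 2 ^ n * (1 + 2 ^ n + (1 / t + 1 / (1 - t))) := by
    have : 0 < 1 - t := by linarith
    positivity
  by_cases htop : fsSharp f y = ⊤
  · rw [htop, ENNReal.mul_top (mul_ne_zero (ENNReal.ofReal_pos.2 hK).ne' Q.volume_set_ne_zero)]
    exact le_top
  have hoR := (ENNReal.ofReal_le_iff_le_toReal htop).1
    (ofReal_meanOsc_le_fsSharp f (Q.set_subset_dilate one_le_two hy))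
  have hoQ := (ENNReal.ofReal_le_iff_le_toReal htop).1 (ofReal_meanOsc_le_fsSharp f hy)
  rw [← ofReal_integral_eq_lintegral_ofReal
    (integrableOn_abs_sub_const (R.integrableOn_of_locallyIntegrable hf) _)
    (Filter.Eventually.of_forall fun _ => abs_nonneg _),
    ← ENNReal.ofReal_toReal Q.volume_set_ne_top, ← ENNReal.ofReal_toReal htop,
    ← ENNReal.ofReal_mul hK.le, ← ENNReal.ofReal_mul (by positivity)]
  refine ENNReal.ofReal_le_ofReal <| (setIntegral_abs_sub_median_dilate_le hf ht0 ht1 Q).trans ?_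
  have := meanOsc_nonneg f R
  have := meanOsc_nonneg f Q
  have : 0 < 1 - t := by linarith
  calc 2 ^ n * (volume Q.set).toReal * ((1 + 2 ^ n) * meanOsc f R
        + (1 / t + 1 / (1 - t)) * meanOsc f Q)
      ≤ 2 ^ n * (volume Q.set).toReal * ((1 + 2 ^ n) * (fsSharp f y).toReal
        + (1 / t + 1 / (1 - t)) * (fsSharp f y).toReal) := by gcongr
    _ = _ := by ring

/-- Let `T` be of weak type (1,1), `0 < s ≤ 1/2`, `1/2 ≤ t ≤ 1 − s`.
There is `c₁ > 0` such that for every cube `Q ⊂ ℝⁿ`, every locally integrable `f`, and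
every `λ > 0`, with `f₁ = (f − m_f(t,Q)) χ_{2Q}`:
`|{z ∈ Q : |Tf₁(z)| > λ}| ≤ c₁ (|Q|/λ) inf_{y ∈ Q} M♯f(y)`. -/
theorem statement11 {n : ℕ} (T : (Sp n → ℝ) → (Sp n → ℝ)) (CT : ℝ)
    (hT : ∀ g : Sp n → ℝ, Integrable g → ∀ lam : ℝ, 0 < lam →
      volume {x | ENNReal.ofReal lam < ENNReal.ofReal |T g x|}
        ≤ ENNReal.ofReal CT * (∫⁻ x, ENNReal.ofReal |g x|) / ENNReal.ofReal lam)
    (s t : ℝ) (hs0 : 0 < s) (ht : 1 / 2 ≤ t) (ht1 : t ≤ 1 - s) :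
    ∃ c₁ : ℝ, 0 < c₁ ∧
      ∀ (Q : Cube n) (f : Sp n → ℝ), LocallyIntegrable f volume →
        ∀ lam : ℝ, 0 < lam →
          volume {z ∈ Q.set |
              ENNReal.ofReal lam <
                ENNReal.ofReal
                  |T (Set.indicator (Q.dilate 2 (by norm_num)).set
                      (fun y => f y - median f t Q)) z|}
            ≤ ENNReal.ofReal c₁ * volume Q.set * (⨅ y : Q.set, fsSharp f ↑y) /
                ENNReal.ofReal lam := by
  have ht0 : 0 < t := by linarith
  have ht1' : t < 1 := by linarith
  set K := 2 ^ n * (1 + 2 ^ n + (1 / t + 1 / (1 - t)))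
  have hK : 0 < K := by
    have : 0 < 1 - t := by linarith
    positivity
  refine ⟨max CT 1 * K, by positivity, fun Q f hf lam hlam => ?_⟩
  set R := Q.dilate 2 two_pos
  set f₁ := R.set.indicator fun y => f y - median f t Q
  have hf₁ : Integrable f₁ :=
    ((R.integrableOn_of_locallyIntegrable hf).sub
      (integrableOn_const R.volume_set_ne_top)).integrable_indicator R.measurableSet_set
  have hnorm : ∫⁻ x, ENNReal.ofReal |f₁ x|
      = ∫⁻ x in R.set, ENNReal.ofReal |f x - median f t Q| := by
    rw [← lintegral_indicator R.measurableSet_set]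
    congr 1 with x
    by_cases hx : x ∈ R.set <;> simp [f₁, hx]
  have hpoint : ∀ y : Q.set, volume {z ∈ Q.set | ENNReal.ofReal lam < ENNReal.ofReal |T f₁ z|}
      ≤ ENNReal.ofReal (max CT 1 * K) * volume Q.set * fsSharp f y / ENNReal.ofReal lam :=
    fun y => calc
      _ ≤ volume {x | ENNReal.ofReal lam < ENNReal.ofReal |T f₁ x|} :=
          measure_mono fun _ hz => hz.2
      _ ≤ ENNReal.ofReal CT * (∫⁻ x, ENNReal.ofReal |f₁ x|) / ENNReal.ofReal lam :=
          hT f₁ hf₁ lam hlam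
      _ ≤ ENNReal.ofReal (max CT 1) * (ENNReal.ofReal K * volume Q.set * fsSharp f y)
            / ENNReal.ofReal lam := by
          rw [hnorm]
          gcongr
          · exact le_max_left CT 1
          · exact lintegral_abs_sub_median_dilate_le hf ht0 ht1' y.2
      _ = _ := by
          rw [ENNReal.ofReal_mul (p := max CT 1) (by positivity)]
          simp only [mul_assoc]
  have hC : ENNReal.ofReal (max CT 1 * K) * volume Q.set ≠ 0 :=
    mul_ne_zero (ENNReal.ofReal_pos.2 (by positivity)).ne' Q.volume_set_ne_zero
  rw [ENNReal.mul_iInf_of_ne hC (ENNReal.mul_ne_top ENNReal.ofReal_ne_top Q.volume_set_ne_top),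
    ENNReal.iInf_div_of_ne (ENNReal.ofReal_pos.2 hlam).ne' ENNReal.ofReal_ne_top]
  exact le_iInf hpoint

end LocalMedian
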